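/- arXiv:2503.09440 — 5 statements merged into one kernel-verified Lean document; each statement's English description precedes it below -/
import Mathlib

section
/- Let {T(v)} be a tree representation of a finite simple graph G, and let v,w be vertices with v ∈ N[w]. Then the root 𝐯 of T(v) belongs to T(w) if and only if d(𝐯) ≥ d(𝐰). -/
/-- A host tree: a finite tree (connected acyclic simple graph on a nonempty
finite node set) with a distinguished root and positive real edge weights. -/
structure HostTree where
  V : Type
  [fintypeV : Fintype V]
  [nonemptyV : Nonempty V]
  G : SimpleGraph V
  isTree : G.IsTree
  root : V
  w : V → V → ℝ
  w_symm : ∀ x y : V, w x y = w y x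
  w_pos : ∀ x y : V, G.Adj x y → 0 < w x y

attribute [instance] HostTree.fintypeV HostTree.nonemptyV

/-- The unique path in the host tree from the root to a node. -/
noncomputable def HostTree.rootPath (T : HostTree) (x : T.V) : T.G.Walk T.root x :=
  (T.isTree.existsUnique_path T.root x).choose

/-- The depth of a node: the sum of the weights of the edges on the unique
path from the root to the node. -/
noncomputable def HostTree.depth (T : HostTree) (x : T.V) : ℝ :=
  ((T.rootPath x).darts.map (fun d => T.w d.toProd.1 d.toProd.2)).sum

/-- A subtree of the host tree: a nonempty set of nodes inducing a connected
subgraph. -/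
def HostTree.IsSubtree (T : HostTree) (S : Set T.V) : Prop :=
  S.Nonempty ∧ (T.G.induce S).Connected

/-- `S₁` overshadows `S₂`: every node of `S₂ \ S₁` has strictly greater depth
than every node of `S₂ ∩ S₁`. -/
def HostTree.Overshadows (T : HostTree) (S₁ S₂ : Set T.V) : Prop :=
  ∀ x ∈ S₂ \ S₁, ∀ y ∈ S₂ ∩ S₁, T.depth y < T.depth x

/-- Two subtrees are compatible if one overshadows the other. -/
def HostTree.CompatiblePair (T : HostTree) (S₁ S₂ : Set T.V) : Prop :=
  T.Overshadows S₁ S₂ ∨ T.Overshadows S₂ S₁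

/-- `x` is the root of the subtree `S`: a node of `S` of minimum depth. -/
def HostTree.IsSubtreeRoot (T : HostTree) (S : Set T.V) (x : T.V) : Prop :=
  x ∈ S ∧ ∀ y ∈ S, T.depth x ≤ T.depth y

/-- The closed neighbourhood `N[v]` of a vertex. -/
def closedNbhd {α : Type*} (G : SimpleGraph α) (v : α) : Set α :=
  insert v (G.neighborSet v)

/-- A tree representation of `G`: a subtree `t v` of the host tree for every
vertex `v`, such that distinct vertices are adjacent iff their subtrees meet. -/
def IsTreeRep {α : Type*} (G : SimpleGraph α) (T : HostTree) (t : α → Set T.V) : Prop :=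
  (∀ v : α, T.IsSubtree (t v)) ∧
  ∀ u v : α, u ≠ v → (G.Adj u v ↔ (t u ∩ t v).Nonempty)

/-- A compatible tree representation: a tree representation all of whose
subtrees are pairwise compatible. -/
def IsCompatibleTreeRep {α : Type*} (G : SimpleGraph α) (T : HostTree)
    (t : α → Set T.V) : Prop :=
  IsTreeRep G T t ∧ ∀ u v : α, T.CompatiblePair (t u) (t v)

/-- A strong elimination order. -/
def IsStrongElimOrder {α : Type*} (G : SimpleGraph α) {n : ℕ} (σ : Fin n ≃ α) : Prop :=
  ∀ i j k l : Fin n, i < j → k < l →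
    σ k ∈ closedNbhd G (σ i) → σ l ∈ closedNbhd G (σ i) →
    σ k ∈ closedNbhd G (σ j) → σ l ∈ closedNbhd G (σ j)

/-!
Depth increases strictly along the path from the root, and a subtree is convex: it contains the
path between any two of its nodes. Hence the root of a subtree lies on the root path of each of
its nodes. If `x ∈ T(v) ∩ T(w)`, both roots lie on the root path of `x`; when `d(𝐰) ≤ d(𝐯)`, the
root `𝐯` lies on its segment from `𝐰` to `x`, which is contained in `T(w)`.
-/

open SimpleGraph

theorem SimpleGraph.Walk.IsPath.append {V : Type*} {G : SimpleGraph V} {x y z : V}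
    {p : G.Walk x y} {q : G.Walk y z} (hp : p.IsPath) (hq : q.IsPath)
    (hpq : ∀ u ∈ p.support, u ∈ q.support → u = y) : (p.append q).IsPath := by
  have hq' := (Walk.isPath_def q).mp hq
  rw [Walk.isPath_def, Walk.support_append]
  refine ((Walk.isPath_def p).mp hp).append hq'.tail fun u hup huq => ?_
  obtain rfl := hpq u hup (List.mem_of_mem_tail huq)
  rw [← Walk.cons_tail_support] at hq'
  exact (List.nodup_cons.mp hq').1 huq

theorem SimpleGraph.exists_isPath_of_induce_preconnected {V : Type*} {G : SimpleGraph V}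
    {S : Set V} (hS : (G.induce S).Preconnected) {x y : V} (hx : x ∈ S) (hy : y ∈ S) :
    ∃ p : G.Walk x y, p.IsPath ∧ ∀ z ∈ p.support, z ∈ S := by
  classical
  obtain ⟨q⟩ := hS ⟨x, hx⟩ ⟨y, hy⟩
  have hqS : ∀ z ∈ (q.map (Embedding.induce S).toHom).support, z ∈ S := by
    simp only [Walk.support_map, List.mem_map]
    rintro _ ⟨z, -, rfl⟩
    exact z.2
  exact ⟨_, Walk.bypass_isPath _, fun z hz => hqS z (Walk.support_bypass_subset_support _ hz)⟩

theorem SimpleGraph.IsAcyclic.mem_of_mem_support_isPath {V : Type*} {G : SimpleGraph V}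
    (hG : G.IsAcyclic) {S : Set V} (hS : (G.induce S).Preconnected) {x y : V}
    (hx : x ∈ S) (hy : y ∈ S) (p : G.Walk x y) (hp : p.IsPath) : ∀ z ∈ p.support, z ∈ S := by
  obtain ⟨q, hq, hqS⟩ := exists_isPath_of_induce_preconnected hS hx hy
  obtain rfl : p = q := congrArg Subtype.val ((hG.subsingleton_path x y).elim ⟨p, hp⟩ ⟨q, hq⟩)
  exact hqS

namespace HostTree

variable (T : HostTree)

noncomputable def walkWeight {x y : T.V} (p : T.G.Walk x y) : ℝ :=
  (p.darts.map fun d => T.w d.toProd.1 d.toProd.2).sum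

theorem walkWeight_append {x y z : T.V} (p : T.G.Walk x y) (q : T.G.Walk y z) :
    T.walkWeight (p.append q) = T.walkWeight p + T.walkWeight q := by
  simp [walkWeight, Walk.darts_append]

theorem walkWeight_nonneg {x y : T.V} (p : T.G.Walk x y) : 0 ≤ T.walkWeight p := by
  induction p with
  | nil => simp [walkWeight]
  | cons h p ih =>
    simp only [walkWeight, Walk.darts_cons, List.map_cons, List.sum_cons] at ih ⊢
    exact add_nonneg (T.w_pos _ _ h).le ih

theorem walkWeight_pos {x y : T.V} (p : T.G.Walk x y) (hxy : x ≠ y) : 0 < T.walkWeight p := by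
  cases p with
  | nil => exact absurd rfl hxy
  | cons h q =>
    simp only [walkWeight, Walk.darts_cons, List.map_cons, List.sum_cons]
    exact add_pos_of_pos_of_nonneg (T.w_pos _ _ h) (T.walkWeight_nonneg q)

theorem rootPath_isPath (x : T.V) : (T.rootPath x).IsPath :=
  (T.isTree.existsUnique_path T.root x).choose_spec.1

theorem eq_rootPath_of_isPath {x : T.V} (p : T.G.Walk T.root x) (hp : p.IsPath) :
    p = T.rootPath x :=
  (T.isTree.existsUnique_path T.root x).unique hp (T.rootPath_isPath x)

theorem depth_eq_walkWeight {x : T.V} (p : T.G.Walk T.root x) (hp : p.IsPath) :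
    T.depth x = T.walkWeight p := by
  rw [T.eq_rootPath_of_isPath p hp]
  rfl

variable {T}

theorem depth_add_walkWeight_dropUntil [DecidableEq T.V] {x y : T.V} {p : T.G.Walk T.root x}
    (hp : p.IsPath) (hy : y ∈ p.support) :
    T.depth y + T.walkWeight (p.dropUntil y hy) = T.depth x := by
  rw [T.depth_eq_walkWeight _ (hp.takeUntil hy), T.depth_eq_walkWeight p hp,
    ← walkWeight_append, Walk.take_spec]

theorem depth_lt_of_mem_support {x y : T.V} {p : T.G.Walk T.root x} (hp : p.IsPath)
    (hy : y ∈ p.support) (hne : y ≠ x) : T.depth y < T.depth x := by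
  classical
  linarith [depth_add_walkWeight_dropUntil hp hy, T.walkWeight_pos (p.dropUntil y hy) hne]

theorem mem_support_dropUntil_of_depth_le [DecidableEq T.V] {x y z : T.V}
    {p : T.G.Walk T.root x} (hp : p.IsPath) (hy : y ∈ p.support) (hz : z ∈ p.support)
    (hzy : T.depth z ≤ T.depth y) : y ∈ (p.dropUntil z hz).support := by
  rw [← p.take_spec hz, Walk.mem_support_append_iff] at hy
  rcases hy with hy | hy
  · rcases eq_or_ne y z with rfl | hne
    · exact Walk.start_mem_support _
    · exact absurd hzy (not_le.mpr (depth_lt_of_mem_support (hp.takeUntil hz) hy hne))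
  · exact hy

/-- The root path of `r` meets the subtree only at `r`, so continuing it inside the subtree to
`x` gives a path, which must be the root path of `x`. -/
theorem mem_support_rootPath_of_isSubtreeRoot {S : Set T.V} (hS : (T.G.induce S).Preconnected)
    {r x : T.V} (hr : T.IsSubtreeRoot S r) (hx : x ∈ S) : r ∈ (T.rootPath x).support := by
  obtain ⟨q, hq, hqS⟩ := exists_isPath_of_induce_preconnected hS hr.1 hx
  have hmeet : ∀ u ∈ (T.rootPath r).support, u ∈ q.support → u = r := by
    intro u hu huq
    by_contra hne
    linarith [depth_lt_of_mem_support (T.rootPath_isPath r) hu hne, hr.2 u (hqS u huq)]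
  rw [← T.eq_rootPath_of_isPath _ ((T.rootPath_isPath r).append hq hmeet),
    Walk.mem_support_append_iff]
  exact Or.inl (Walk.end_mem_support _)

end HostTree

theorem root_mem_iff_depth_ge_general {α : Type} (G : SimpleGraph α)
    (T : HostTree) (t : α → Set T.V) (h : IsTreeRep G T t)
    (rt : α → T.V) (hrt : ∀ u : α, T.IsSubtreeRoot (t u) (rt u))
    (v w : α) (hvw : v ∈ closedNbhd G w) :
    rt v ∈ t w ↔ T.depth (rt w) ≤ T.depth (rt v) := by
  classical
  refine ⟨(hrt w).2 (rt v), fun hle => ?_⟩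
  rcases eq_or_ne v w with rfl | hne
  · exact (hrt v).1
  have hadj : G.Adj w v := (Set.mem_insert_iff.mp hvw).resolve_left hne
  obtain ⟨x, hxw, hxv⟩ := (h.2 w v hne.symm).mp hadj
  have hconn (u : α) : (T.G.induce (t u)).Preconnected := (h.1 u).2.preconnected
  have hx := T.rootPath_isPath x
  have hv := HostTree.mem_support_rootPath_of_isSubtreeRoot (hconn v) (hrt v) hxv
  have hw := HostTree.mem_support_rootPath_of_isSubtreeRoot (hconn w) (hrt w) hxw
  exact T.isTree.isAcyclic.mem_of_mem_support_isPath (hconn w) (hrt w).1 hxw _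
    (hx.dropUntil hw) _ (HostTree.mem_support_dropUntil_of_depth_le hx hv hw hle)

/-- In a tree representation, for `v ∈ N[w]`, the root of `T(v)` belongs to
`T(w)` iff its depth is at least the depth of the root of `T(w)`. -/
theorem root_mem_iff_depth_ge {α : Type} [Fintype α] (G : SimpleGraph α)
    (T : HostTree) (t : α → Set T.V) (h : IsTreeRep G T t)
    (rt : α → T.V) (hrt : ∀ u : α, T.IsSubtreeRoot (t u) (rt u))
    (v w : α) (hvw : v ∈ closedNbhd G w) :
    rt v ∈ t w ↔ T.depth (rt w) ≤ T.depth (rt v) :=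
  root_mem_iff_depth_ge_general G T t h rt hrt v w hvw
end

section
/- Let T₁,…,T_k (k ≥ 2) be subtrees of a host tree, and set T₀ = T_k. If for every i = 0,…,k−1 the subtree T_i does not overshadow T_{i+1}, then the subtrees are not pairwise compatible: there exist indices i ≠ j such that neither T_i overshadows T_j nor T_j overshadows T_i. -/
/-! If the subtrees were pairwise compatible, every `T_{i+1}` would overshadow `T_i`.
That `T_i` does not overshadow `T_{i+1}` is witnessed by a node `x_i ∈ T_{i+1} \ T_i` no deeper
than some node of `T_i ∩ T_{i+1}`. Let `a` be the least depth of these witnesses. Since `T_{i+1}`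
overshadows `T_i`, the nodes of `T_i` of depth at most `a` all lie in `T_{i+1}`, so these sublevel
sets increase around the cycle and hence are all equal; but the witness of least depth lies in
one of them and not in its predecessor. -/

theorem Nat.ne_add_one_mod {i k : ℕ} (hk : 2 ≤ k) (hi : i < k) : i ≠ (i + 1) % k := by
  obtain h | h : i + 1 < k ∨ i + 1 = k := by omega
  · rw [Nat.mod_eq_of_lt h]
    omega
  · rw [h, Nat.mod_self]
    omega

theorem le_of_forall_le_add_one_mod {β : Type*} [Preorder β] {k : ℕ} {s : ℕ → β}
    (hs : ∀ i < k, s i ≤ s ((i + 1) % k)) {i j : ℕ} (hi : i < k) (hj : j < k) :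
    s i ≤ s j := by
  have hreach : ∀ n, s i ≤ s ((i + n) % k) := by
    intro n
    induction n with
    | zero => rw [Nat.add_zero, Nat.mod_eq_of_lt hi]
    | succ n ih =>
      calc s i ≤ s ((i + n) % k) := ih
        _ ≤ s (((i + n) % k + 1) % k) := hs _ (Nat.mod_lt _ (by omega))
        _ = s ((i + (n + 1)) % k) := by rw [Nat.mod_add_mod, Nat.add_assoc]
  have hj' : (i + (j + k - i)) % k = j := by
    rw [show i + (j + k - i) = j + k by omega, Nat.add_mod_right, Nat.mod_eq_of_lt hj]
  simpa only [hj'] using hreach (j + k - i)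

namespace HostTree

variable (T : HostTree)

theorem not_overshadows_iff {S₁ S₂ : Set T.V} :
    ¬ T.Overshadows S₁ S₂ ↔
      ∃ x ∈ S₂ \ S₁, ∃ y ∈ S₂ ∩ S₁, T.depth x ≤ T.depth y := by
  simp only [Overshadows, not_forall, not_lt, exists_prop]

theorem mem_of_overshadows_of_depth_le {S₁ S₂ : Set T.V} (h : T.Overshadows S₁ S₂)
    {x y : T.V} (hx : x ∈ S₂) (hy : y ∈ S₂ ∩ S₁) (hxy : T.depth x ≤ T.depth y) :
    x ∈ S₁ := by
  by_contra hx₁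
  exact (h x ⟨hx, hx₁⟩ y hy).not_ge hxy

theorem false_of_overshadows_cycle {k : ℕ} (hk : 0 < k) {f : ℕ → Set T.V}
    (hov : ∀ i < k, T.Overshadows (f ((i + 1) % k)) (f i))
    (hno : ∀ i < k, ¬ T.Overshadows (f i) (f ((i + 1) % k))) : False := by
  choose x hx y hy hxy using fun i : Fin k => (T.not_overshadows_iff).mp (hno i i.2)
  have : Nonempty (Fin k) := ⟨⟨0, hk⟩⟩
  obtain ⟨i₀, hi₀⟩ := Finite.exists_min fun i => T.depth (x i)
  set sublevel : ℕ → Set T.V := fun j => f j ∩ {v | T.depth v ≤ T.depth (x i₀)}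
  have hstep : ∀ j < k, sublevel j ⊆ sublevel ((j + 1) % k) := by
    intro j hj z ⟨hz, hza⟩
    have hyj := hy ⟨j, hj⟩
    have hzy : T.depth z ≤ T.depth (y ⟨j, hj⟩) := hza.trans ((hi₀ _).trans (hxy _))
    exact ⟨T.mem_of_overshadows_of_depth_le (hov j hj) hz ⟨hyj.2, hyj.1⟩ hzy, hza⟩
  have hback : sublevel ((i₀ + 1) % k) ⊆ sublevel i₀ :=
    le_of_forall_le_add_one_mod hstep (Nat.mod_lt _ hk) i₀.2
  exact (hx i₀).2 (hback ⟨(hx i₀).1, le_refl (T.depth (x i₀))⟩).1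

end HostTree

theorem not_overshadow_cycle_not_compatible_general (T : HostTree) (k : ℕ) (hk : 2 ≤ k)
    (f : ℕ → Set T.V)
    (hno : ∀ i < k, ¬ T.Overshadows (f i) (f ((i + 1) % k))) :
    ∃ i < k, ∃ j < k, i ≠ j ∧
      ¬ T.Overshadows (f i) (f j) ∧ ¬ T.Overshadows (f j) (f i) := by
  by_contra hcompat
  push Not at hcompat
  refine T.false_of_overshadows_cycle (by omega) (f := f) (fun i hi => ?_) hno
  exact hcompat i hi _ (Nat.mod_lt _ (by omega)) (Nat.ne_add_one_mod hk hi) (hno i hi)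

/-- If subtrees `T₀,…,T_{k-1}` (k ≥ 2) form a cycle of non-overshadowing
(`T_i` does not overshadow `T_{(i+1) mod k}` for each `i`), then some two of
them are incompatible. -/
theorem not_overshadow_cycle_not_compatible (T : HostTree) (k : ℕ) (hk : 2 ≤ k)
    (f : ℕ → Set T.V) (hsub : ∀ i < k, T.IsSubtree (f i))
    (hno : ∀ i < k, ¬ T.Overshadows (f i) (f ((i + 1) % k))) :
    ∃ i < k, ∃ j < k, i ≠ j ∧
      ¬ T.Overshadows (f i) (f j) ∧ ¬ T.Overshadows (f j) (f i) :=
  not_overshadow_cycle_not_compatible_general T k hk f hno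
end

section
/- If a finite simple graph G has a compatible tree representation, then G has a strong elimination order. -/
/-!
Sort the vertices so that the depth profiles `θ ↦ #{x ∈ t v | depth x ≤ θ}` increase
lexicographically. If `S₁` does not overshadow a compatible `S₂`, then `S₂` overshadows `S₁`,
and some node of `S₂ \ S₁` is no deeper than a node of `S₁ ∩ S₂`; up to that depth `S₁` lies
inside `S₂`, so `S₂` has the larger profile. Hence in this order each subtree is overshadowed by
all later ones, and the roots get shallower.

Now let `i < j`, `k < l` with `t k`, `t l` meeting `t i` and `t k` meeting `t j`; by symmetry
`t k` overshadows `t i`. Then a root of `t i` lies in `t k ∩ t l`, and some node of `t k ∩ t j` is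
no deeper than it. Since `t l` overshadows `t k`, that node lies in `t l` as well.
-/

theorem Pi.toLex_lt_of_le_of_lt {ι β : Type*} [LinearOrder ι] [WellFoundedLT ι] [PartialOrder β]
    {f g : ι → β} {i : ι} (hle : ∀ j ≤ i, f j ≤ g j) (hlt : f i < g i) :
    toLex f < toLex g := by
  obtain ⟨j, hj, hmin⟩ := wellFounded_lt.has_min {j | f j ≠ g j} ⟨i, hlt.ne⟩
  have hji : j ≤ i := not_lt.mp fun h => hmin i hlt.ne h
  exact ⟨j, fun k hk => not_not.mp fun h => hmin k h hk, (hle j hji).lt_of_ne hj⟩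

theorem Fintype.exists_equivFin_monotone {α β : Type*} [Fintype α] [LinearOrder β] (f : α → β) :
    ∃ σ : Fin (Fintype.card α) ≃ α, Monotone (f ∘ σ) :=
  let e := (Fintype.equivFin α).symm
  ⟨(Tuple.sort (f ∘ e)).trans e, Tuple.monotone_sort (f ∘ e)⟩

namespace HostTree

variable {T : HostTree} {S S₁ S₂ : Set T.V} {s s₁ s₂ : T.V}

theorem exists_isSubtreeRoot (hS : S.Nonempty) : ∃ s, T.IsSubtreeRoot S s :=
  Set.exists_min_image S T.depth S.toFinite hS

theorem IsSubtreeRoot.mem_of_overshadows (hs : T.IsSubtreeRoot S₂ s) (hov : T.Overshadows S₁ S₂)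
    (hne : (S₁ ∩ S₂).Nonempty) : s ∈ S₁ := by
  by_contra hs₁
  obtain ⟨y, hy₁, hy₂⟩ := hne
  exact (hov s ⟨hs.1, hs₁⟩ y ⟨hy₂, hy₁⟩).not_ge (hs.2 y hy₂)

theorem root_mem_or_root_mem (hc : T.CompatiblePair S₁ S₂) (hne : (S₁ ∩ S₂).Nonempty)
    (h₁ : T.IsSubtreeRoot S₁ s₁) (h₂ : T.IsSubtreeRoot S₂ s₂) : s₁ ∈ S₂ ∨ s₂ ∈ S₁ :=
  hc.imp (h₂.mem_of_overshadows · hne) (h₁.mem_of_overshadows · (Set.inter_comm _ _ ▸ hne))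
    |>.symm

theorem exists_root_mem_of_depth_le (hc : T.CompatiblePair S₁ S₂) (hne : (S₁ ∩ S₂).Nonempty)
    (h₁ : T.IsSubtreeRoot S₁ s₁) (h₂ : T.IsSubtreeRoot S₂ s₂) (hd : T.depth s₂ ≤ T.depth s₁) :
    ∃ s, T.IsSubtreeRoot S₁ s ∧ s ∈ S₂ := by
  rcases root_mem_or_root_mem hc hne h₁ h₂ with hs₁ | hs₂
  · exact ⟨s₁, h₁, hs₁⟩
  · exact ⟨s₂, ⟨hs₂, fun y hy => hd.trans (h₁.2 y hy)⟩, h₂.1⟩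

noncomputable def depthProfile (T : HostTree) (S : Set T.V) : Lex (Set.range T.depth → ℕ) :=
  toLex fun θ => {x | x ∈ S ∧ T.depth x ≤ θ}.ncard

theorem depthProfile_lt (hs₂ : s ∈ S₂) (hs₁ : s ∉ S₁)
    (hsub : ∀ x ∈ S₁, T.depth x ≤ T.depth s → x ∈ S₂) :
    T.depthProfile S₁ < T.depthProfile S₂ := by
  have hmono : ∀ θ ≤ T.depth s,
      {x | x ∈ S₁ ∧ T.depth x ≤ θ} ⊆ {x | x ∈ S₂ ∧ T.depth x ≤ θ} :=
    fun θ hθ x hx => ⟨hsub x hx.1 (hx.2.trans hθ), hx.2⟩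
  refine Pi.toLex_lt_of_le_of_lt (i := ⟨T.depth s, s, rfl⟩)
    (fun θ hθ => Set.ncard_le_ncard (hmono θ hθ) (Set.toFinite _)) ?_
  exact Set.ncard_lt_ncard ((Set.ssubset_iff_of_subset (hmono _ le_rfl)).2
    ⟨s, ⟨hs₂, le_rfl⟩, fun h => hs₁ h.1⟩) (Set.toFinite _)

theorem overshadows_of_depthProfile_le (hc : T.CompatiblePair S₁ S₂)
    (h : T.depthProfile S₂ ≤ T.depthProfile S₁) : T.Overshadows S₁ S₂ := by
  by_contra hn
  have hov : T.Overshadows S₂ S₁ := hc.resolve_left hn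
  simp only [Overshadows, not_forall, not_lt] at hn
  obtain ⟨x, hx, y, hy, hxy⟩ := hn
  refine h.not_gt (depthProfile_lt hx.1 hx.2 fun z hz hzx => ?_)
  by_contra hz₂
  exact (hov z ⟨hz, hz₂⟩ y ⟨hy.2, hy.1⟩).not_ge (hzx.trans hxy)

theorem depth_root_le_of_depthProfile_le (h₁ : T.IsSubtreeRoot S₁ s₁) (h₂ : T.IsSubtreeRoot S₂ s₂)
    (h : T.depthProfile S₁ ≤ T.depthProfile S₂) : T.depth s₂ ≤ T.depth s₁ := by
  by_contra! hlt
  refine h.not_gt (depthProfile_lt h₁.1 (fun hs => (h₂.2 _ hs).not_gt hlt) fun x hx hxs => ?_)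
  exact absurd (hxs.trans_lt hlt) (h₂.2 x hx).not_gt

theorem inter_nonempty_of_overshadows {A B K L : Set T.V} {a b k l : T.V}
    (ha : T.IsSubtreeRoot A a) (hb : T.IsSubtreeRoot B b) (hk : T.IsSubtreeRoot K k)
    (hl : T.IsSubtreeRoot L l) (hKA : T.Overshadows K A) (hLK : T.Overshadows L K)
    (hcAL : T.CompatiblePair A L) (hcKB : T.CompatiblePair K B)
    (hKA' : (K ∩ A).Nonempty) (hAL : (A ∩ L).Nonempty) (hKB : (K ∩ B).Nonempty)
    (hba : T.depth b ≤ T.depth a) (hlk : T.depth l ≤ T.depth k) : (B ∩ L).Nonempty := by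
  have hka : T.depth k ≤ T.depth a := hk.2 a (ha.mem_of_overshadows hKA hKA')
  obtain ⟨a', ha', ha'L⟩ := exists_root_mem_of_depth_le hcAL hAL ha hl (hlk.trans hka)
  have ha'K : a' ∈ K := ha'.mem_of_overshadows hKA hKA'
  have hp : ∃ p ∈ K ∩ B, T.depth p ≤ T.depth a' := by
    rw [le_antisymm (ha'.2 a ha.1) (ha.2 a' ha'.1)]
    rcases root_mem_or_root_mem hcKB hKB hk hb with hkB | hbK
    · exact ⟨k, ⟨hk.1, hkB⟩, hka⟩
    · exact ⟨b, ⟨hbK, hb.1⟩, hba⟩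
  obtain ⟨p, ⟨hpK, hpB⟩, hpa'⟩ := hp
  by_contra hBL
  have hpL : p ∉ L := fun hpL => hBL ⟨p, hpB, hpL⟩
  exact (hLK p ⟨hpK, hpL⟩ a' ⟨ha'K, ha'L⟩).not_ge hpa'

theorem inter_nonempty_of_depthProfile_le {α : Type*} {t : α → Set T.V}
    (hne : ∀ v, (t v).Nonempty) (hcomp : ∀ u v, T.CompatiblePair (t u) (t v)) {a b k l : α}
    (hab : T.depthProfile (t a) ≤ T.depthProfile (t b))
    (hkl : T.depthProfile (t k) ≤ T.depthProfile (t l))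
    (hak : (t a ∩ t k).Nonempty) (hal : (t a ∩ t l).Nonempty) (hbk : (t b ∩ t k).Nonempty) :
    (t b ∩ t l).Nonempty := by
  choose r hr using fun v => exists_isSubtreeRoot (hne v)
  have hba := depth_root_le_of_depthProfile_le (hr a) (hr b) hab
  have hlk := depth_root_le_of_depthProfile_le (hr k) (hr l) hkl
  have hBA := overshadows_of_depthProfile_le (hcomp b a) hab
  have hLK := overshadows_of_depthProfile_le (hcomp l k) hkl
  rcases hcomp k a with hKA | hAK
  · exact inter_nonempty_of_overshadows (hr a) (hr b) (hr k) (hr l) hKA hLK (hcomp a l)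
      (hcomp k b) (Set.inter_comm _ _ ▸ hak) hal (Set.inter_comm _ _ ▸ hbk) hba hlk
  · rw [Set.inter_comm]
    exact inter_nonempty_of_overshadows (hr k) (hr l) (hr a) (hr b) hAK hBA (hcomp k b)
      (hcomp a l) hak (Set.inter_comm _ _ ▸ hbk) hal hlk hba

end HostTree

theorem IsTreeRep.mem_closedNbhd_iff {α : Type*} {G : SimpleGraph α} {T : HostTree}
    {t : α → Set T.V} (h : IsTreeRep G T t) {u w : α} :
    w ∈ closedNbhd G u ↔ (t u ∩ t w).Nonempty := by
  rcases eq_or_ne w u with rfl | hwu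
  · simpa [closedNbhd] using (h.1 w).1
  · simp [closedNbhd, hwu, h.2 u w hwu.symm]

/-- A finite simple graph with a compatible tree representation has a strong
elimination order. -/
theorem compatibleTreeRep_to_strongElimOrder {α : Type} [Fintype α]
    (G : SimpleGraph α) (T : HostTree) (t : α → Set T.V)
    (h : IsCompatibleTreeRep G T t) :
    ∃ (n : ℕ) (σ : Fin n ≃ α), IsStrongElimOrder G σ := by
  obtain ⟨hrep, hcomp⟩ := h
  obtain ⟨σ, hσ⟩ := Fintype.exists_equivFin_monotone (T.depthProfile ∘ t)
  refine ⟨_, σ, fun i j k l hij hkl hki hli hkj => ?_⟩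
  rw [hrep.mem_closedNbhd_iff] at hki hli hkj ⊢
  exact HostTree.inter_nonempty_of_depthProfile_le (fun v => (hrep.1 v).1) hcomp
    (hσ hij.le) (hσ hkl.le) hki hli hkj
end

section
/- If a finite simple graph G has a perfect elimination order, then G has a tree representation, i.e., G is the intersection graph of a collection of subtrees of a finite tree. -/
/-- A perfect elimination order: for each `i`, the later neighbours of `vᵢ`
form a clique. -/
def IsPerfectElimOrder {α : Type*} (G : SimpleGraph α) {n : ℕ} (σ : Fin n ≃ α) : Prop :=
  ∀ i j k : Fin n, i < j → i < k → j ≠ k →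
    G.Adj (σ i) (σ j) → G.Adj (σ i) (σ k) → G.Adj (σ j) (σ k)

/-!
Make the first later neighbour of each vertex its parent, and add a root above the vertices
without later neighbours; parents come strictly later, so this is a tree. Represent `v` by the
nodes of `v` and of its earlier neighbours. By the perfect elimination property, the parent of an
earlier neighbour `u` of `v` is `v` or again an earlier neighbour of `v`, so this set is a
subtree. If the sets of `u ≠ v` meet in a node `w` other than `u` and `v`, then `w` precedes both,
so `u` and `v` are later neighbours of `w` and hence adjacent.
-/

open SimpleGraph

section ParentGraph

variable {β ι : Type*} [Preorder ι] {p : β → Option β} {r : Option β → ι}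

def parentEdge (p : β → Option β) (a : β) : Sym2 (Option β) := s(some a, p a)

def parentGraph (p : β → Option β) : SimpleGraph (Option β) :=
  fromEdgeSet (Set.range (parentEdge p))

lemma parentGraph_adj_parent (hr : ∀ a, r (some a) < r (p a)) (a : β) :
    (parentGraph p).Adj (some a) (p a) :=
  (fromEdgeSet_adj _).2 ⟨⟨a, rfl⟩, fun h => (hr a).ne (congrArg r h)⟩

lemma edgeSet_parentGraph (hr : ∀ a, r (some a) < r (p a)) :
    (parentGraph p).edgeSet = Set.range (parentEdge p) := by
  rw [parentGraph, edgeSet_fromEdgeSet, sdiff_eq_left, Set.disjoint_left]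
  rintro _ ⟨a, rfl⟩
  exact (parentGraph_adj_parent hr a).ne

lemma parentEdge_injective (hr : ∀ a, r (some a) < r (p a)) :
    Function.Injective (parentEdge p) := by
  intro a b hab
  rcases Sym2.eq_iff.1 hab with ⟨hab, -⟩ | ⟨hba, hab⟩
  · exact Option.some_injective _ hab
  · have := ((hr a).trans_eq (congrArg r hab)).trans ((hr b).trans_eq (congrArg r hba.symm))
    exact (lt_irrefl _ this).elim

/-- Following parents strictly increases the well-founded rank `r`, so it leads to `x₀`. -/
lemma parentGraph_induce_reachable [WellFoundedGT ι] (hr : ∀ a, r (some a) < r (p a))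
    {S : Set (Option β)} {x₀ : Option β} (h₀ : x₀ ∈ S)
    (hS : ∀ x ∈ S, x ≠ x₀ → ∃ a, x = some a ∧ p a ∈ S) (x : Option β) (hx : x ∈ S) :
    ((parentGraph p).induce S).Reachable ⟨x, hx⟩ ⟨x₀, h₀⟩ := by
  induction x using (InvImage.wf r wellFounded_gt).induction with
  | _ x ih =>
    by_cases hx₀ : x = x₀
    · subst hx₀
      rfl
    obtain ⟨a, rfl, hpa⟩ := hS x hx hx₀
    have hadj : ((parentGraph p).induce S).Adj ⟨some a, hx⟩ ⟨p a, hpa⟩ :=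
      parentGraph_adj_parent hr a
    exact hadj.reachable.trans (ih (p a) (hr a) hpa)

lemma parentGraph_induce_connected [WellFoundedGT ι] (hr : ∀ a, r (some a) < r (p a))
    {S : Set (Option β)} {x₀ : Option β} (h₀ : x₀ ∈ S)
    (hS : ∀ x ∈ S, x ≠ x₀ → ∃ a, x = some a ∧ p a ∈ S) :
    ((parentGraph p).induce S).Connected := by
  have : Nonempty S := ⟨⟨x₀, h₀⟩⟩
  rw [connected_iff_exists_forall_reachable]
  exact ⟨⟨x₀, h₀⟩, fun ⟨x, hx⟩ => (parentGraph_induce_reachable hr h₀ hS x hx).symm⟩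

lemma parentGraph_connected [WellFoundedGT ι] (hr : ∀ a, r (some a) < r (p a)) :
    (parentGraph p).Connected := by
  have hroot : ∀ x ∈ Set.univ, x ≠ none → ∃ a, x = some a ∧ p a ∈ Set.univ :=
    fun x _ hx => (Option.ne_none_iff_exists'.1 hx).imp fun _ h => ⟨h, trivial⟩
  rw [connected_iff_exists_forall_reachable]
  exact ⟨none, fun x => ((parentGraph_induce_reachable hr (Set.mem_univ none) hroot x
    (Set.mem_univ x)).map (Embedding.induce _).toHom).symm⟩

lemma parentGraph_isTree [WellFoundedGT ι] [Finite β] (hr : ∀ a, r (some a) < r (p a)) :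
    (parentGraph p).IsTree := by
  rw [isTree_iff_connected_and_card, edgeSet_parentGraph hr,
    Nat.card_range_of_injective (parentEdge_injective hr), Finite.card_option]
  exact ⟨parentGraph_connected hr, rfl⟩

end ParentGraph

section PerfectElimination

variable {β : Type} [LinearOrder β] {H : SimpleGraph β}

def IsPerfectElimOrdered (H : SimpleGraph β) : Prop :=
  ∀ i j k : β, i < j → i < k → j ≠ k → H.Adj i j → H.Adj i k → H.Adj j k

open Classical in
/-- The parent of `i` in the host tree; it is `⊤`, the root `none`, if `i` has no later
neighbour. -/
noncomputable def firstLaterNbr [Fintype β] (H : SimpleGraph β) (i : β) : WithTop β :=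
  (Finset.univ.filter fun j => i < j ∧ H.Adj i j).min

lemma firstLaterNbr_spec [Fintype β] {i j : β} (h : firstLaterNbr H i = j) :
    i < j ∧ H.Adj i j := by
  classical
  simpa using Finset.mem_of_min h

lemma firstLaterNbr_le [Fintype β] {i j : β} (hij : i < j) (hadj : H.Adj i j) :
    firstLaterNbr H i ≤ j := by
  classical
  exact Finset.min_le (by simpa using ⟨hij, hadj⟩)

lemma coe_lt_firstLaterNbr [Fintype β] (i : β) : (i : WithTop β) < firstLaterNbr H i := by
  cases h : firstLaterNbr H i with
  | top => exact WithTop.coe_lt_top i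
  | coe j => exact WithTop.coe_lt_coe.2 (firstLaterNbr_spec h).1

noncomputable def elimHostTree [Fintype β] (H : SimpleGraph β) : HostTree where
  V := Option β
  G := parentGraph (firstLaterNbr H)
  isTree := parentGraph_isTree (ι := WithTop β) (r := id) coe_lt_firstLaterNbr
  root := none
  w _ _ := 1
  w_symm _ _ := rfl
  w_pos _ _ _ := one_pos

def elimSubtree (H : SimpleGraph β) (v : β) : Set (Option β) :=
  some '' (closedNbhd H v ∩ Set.Iic v)

lemma firstLaterNbr_mem_elimSubtree [Fintype β] (hH : IsPerfectElimOrdered H) {u v : β}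
    (huv : u < v) (hadj : H.Adj u v) : firstLaterNbr H u ∈ elimSubtree H v := by
  have hle := firstLaterNbr_le huv hadj
  cases hw : firstLaterNbr H u with
  | top => simp [hw] at hle
  | coe w =>
    rw [hw, WithTop.coe_le_coe] at hle
    obtain ⟨huw, hadj'⟩ := firstLaterNbr_spec hw
    refine ⟨w, ⟨?_, hle⟩, rfl⟩
    rcases hle.eq_or_lt with rfl | hwv
    · exact Or.inl rfl
    · exact Or.inr (hH u w v huw huv hwv.ne hadj' hadj).symm

lemma elimSubtree_isSubtree [Fintype β] (hH : IsPerfectElimOrdered H) (v : β) :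
    (elimHostTree H).IsSubtree (elimSubtree H v) := by
  have hv : some v ∈ elimSubtree H v := ⟨v, ⟨Or.inl rfl, le_rfl⟩, rfl⟩
  refine ⟨⟨_, hv⟩, parentGraph_induce_connected (ι := WithTop β) (r := id)
    coe_lt_firstLaterNbr hv ?_⟩
  rintro _ ⟨u, ⟨hu | hu, huv⟩, rfl⟩ hne
  · exact absurd (congrArg some hu) hne
  · have huv : u < v := huv.lt_of_ne (fun h => hne (congrArg some h))
    exact ⟨u, rfl, firstLaterNbr_mem_elimSubtree hH huv hu.symm⟩

lemma elimSubtree_inter_nonempty_iff (hH : IsPerfectElimOrdered H) {u v : β} (huv : u ≠ v) :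
    (elimSubtree H u ∩ elimSubtree H v).Nonempty ↔ H.Adj u v := by
  rw [elimSubtree, elimSubtree, ← Set.image_inter (Option.some_injective β), Set.image_nonempty]
  constructor
  · rintro ⟨w, ⟨hwu | hwu, hwu'⟩, hwv | hwv, hwv'⟩
    · exact absurd (hwu.symm.trans hwv) huv
    · exact hwu ▸ hwv.symm
    · exact hwv ▸ hwu
    · have hw : w ≠ u ∧ w ≠ v := ⟨hwu.ne.symm, hwv.ne.symm⟩
      exact hH w u v (hwu'.lt_of_ne hw.1) (hwv'.lt_of_ne hw.2) huv hwu.symm hwv.symm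
  · intro hadj
    rcases huv.lt_or_gt with huv | hvu
    · exact ⟨u, ⟨Or.inl rfl, le_rfl⟩, Or.inr hadj.symm, huv.le⟩
    · exact ⟨v, ⟨Or.inr hadj, hvu.le⟩, Or.inl rfl, le_rfl⟩

theorem exists_isTreeRep_of_isPerfectElimOrdered [Fintype β] (hH : IsPerfectElimOrdered H) :
    ∃ (T : HostTree) (t : β → Set T.V), IsTreeRep H T t :=
  ⟨elimHostTree H, elimSubtree H, elimSubtree_isSubtree hH,
    fun _ _ huv => (elimSubtree_inter_nonempty_iff hH huv).symm⟩

end PerfectElimination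

lemma IsTreeRep.of_comap {α β : Type*} {G : SimpleGraph α} (e : β ≃ α) {T : HostTree}
    {t : β → Set T.V} (h : IsTreeRep (G.comap e) T t) : IsTreeRep G T (t ∘ e.symm) :=
  ⟨fun v => h.1 _, fun u v huv => by simpa using h.2 _ _ (e.symm.injective.ne huv)⟩

theorem perfectElimOrder_to_treeRep_general {α : Type} (G : SimpleGraph α)
    {n : ℕ} (σ : Fin n ≃ α) (h : IsPerfectElimOrder G σ) :
    ∃ (T : HostTree) (t : α → Set T.V), IsTreeRep G T t := by
  obtain ⟨T, t, ht⟩ := exists_isTreeRep_of_isPerfectElimOrdered (H := G.comap σ) h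
  exact ⟨T, t ∘ σ.symm, ht.of_comap σ⟩

/-- A finite simple graph with a perfect elimination order has a tree
representation. -/
theorem perfectElimOrder_to_treeRep {α : Type} [Fintype α] (G : SimpleGraph α)
    {n : ℕ} (σ : Fin n ≃ α) (h : IsPerfectElimOrder G σ) :
    ∃ (T : HostTree) (t : α → Set T.V), IsTreeRep G T t :=
  perfectElimOrder_to_treeRep_general G σ h
end

section
/- Let v₁,…,vₙ (n ≥ 1) be a strong elimination order of a finite simple graph G, and perform Farber's construction: for each j < n let p(j) = min{k : k > j and v_k ∈ N[v_j]} if such k exists and p(j) = n otherwise; let T_G be the tree on nodes v₁,…,vₙ with edges {v_j, v_{p(j)}} for j = 1,…,n−1, rooted at vₙ, where the edge {v_j, v_{p(j)}} is given weight p(j) − j; and for each ℓ let T_ℓ = {v_i : i ≤ ℓ and v_i ∈ N[v_ℓ]}. Then the node v_j has depth n − j in this rooted weighted tree for every j, and T_ℓ overshadows T_k whenever k < ℓ. -/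
/-- Farber's host graph: nodes `0,…,n-1` with an edge from each non-last node
`j` to `p j`. -/
def farberTG (n : ℕ) (p : Fin n → Fin n) : SimpleGraph (Fin n) :=
  SimpleGraph.fromRel (fun a b => (a : ℕ) < n - 1 ∧ b = p a)

/-- Farber's subtree for the vertex `v_ℓ`: the indices `i ≤ ℓ` with
`v_i ∈ N[v_ℓ]`. -/
def farberSub {α : Type*} (G : SimpleGraph α) {n : ℕ} (σ : Fin n ≃ α)
    (l : Fin n) : Set (Fin n) :=
  {i : Fin n | i ≤ l ∧ σ i ∈ closedNbhd G (σ l)}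

/-- Overshadowing with respect to an abstract depth function: every node of
`S₂ \ S₁` is strictly deeper than every node of `S₂ ∩ S₁`. -/
def OvershadowsBy {β : Type*} (d : β → ℝ) (S₁ S₂ : Set β) : Prop :=
  ∀ x ∈ S₂ \ S₁, ∀ y ∈ S₂ ∩ S₁, d y < d x

/-!
Each non-last index `j` has exactly one neighbour above it in Farber's graph, namely `p j > j`.
So the least vertex of a cycle would have two distinct cycle-neighbours above it, both equal to
`p` of it: the graph is acyclic. Following `p` from `j` climbs to the last index along a path
whose weights `p i - i` telescope to `n - 1 - j`, and in a tree this is the only path.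

For overshadowing, let `k < l`, `x ∈ T_k \ T_l` and `y ∈ T_k ∩ T_l`. If `y < x`, the strong
elimination property for `k < l` and `y < x` would put `v_x` in `N[v_l]`, hence `x ∈ T_l`;
so `x < y`, i.e. `x` is deeper than `y`.
-/

open SimpleGraph

theorem SimpleGraph.Walk.sum_darts_map_sub {V M : Type*} [AddCommGroup M] {G : SimpleGraph V}
    (f : V → M) {u v : V} (q : G.Walk u v) :
    (q.darts.map fun d => f d.snd - f d.fst).sum = f v - f u := by
  induction q with
  | nil => simp
  | cons _ _ ih => simp only [Walk.darts_cons, List.map_cons, List.sum_cons, ih]; abel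

theorem SimpleGraph.isAcyclic_of_subsingleton_upper_adj {V : Type*} [LinearOrder V]
    {G : SimpleGraph V} (h : ∀ v, {w | v < w ∧ G.Adj v w}.Subsingleton) : G.IsAcyclic := by
  intro v c hc
  obtain ⟨m, hm, hmin⟩ := c.support.toFinset.exists_min_image id ⟨v, by simp⟩
  simp only [List.mem_toFinset, id] at hm hmin
  have hd := hc.rotate hm
  have above : ∀ {w}, w ∈ (c.rotate m hm).support → w ≠ m → m < w := fun hw hne =>
    lt_of_le_of_ne (hmin _ ((Walk.mem_support_rotate_iff ..).1 hw)) hne.symm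
  apply hd.snd_ne_penultimate
  exact h m ⟨above (Walk.getVert_mem_support ..) (Walk.adj_snd hd.not_nil).ne',
      Walk.adj_snd hd.not_nil⟩
    ⟨above (Walk.getVert_mem_support ..) (Walk.adj_penultimate hd.not_nil).ne,
      (Walk.adj_penultimate hd.not_nil).symm⟩

section Farber

variable {n : ℕ} {p : Fin n → Fin n} (hp : ∀ j : Fin n, (j : ℕ) < n - 1 → j < p j)
include hp

theorem farberTG_adj_p (j : Fin n) (hj : (j : ℕ) < n - 1) : (farberTG n p).Adj j (p j) := by
  simp only [farberTG, fromRel_adj]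
  exact ⟨(hp j hj).ne, Or.inl ⟨hj, trivial⟩⟩

theorem eq_of_farberTG_adj_of_lt {a b : Fin n} (hab : (farberTG n p).Adj a b) (hlt : a < b) :
    b = p a := by
  simp only [farberTG, fromRel_adj] at hab
  rcases hab.2 with ⟨_, h⟩ | ⟨hb, rfl⟩
  · exact h
  · exact absurd (hp b hb) hlt.not_gt

theorem farberTG_isAcyclic : (farberTG n p).IsAcyclic :=
  isAcyclic_of_subsingleton_upper_adj fun _ _ ha _ hb =>
    (eq_of_farberTG_adj_of_lt hp ha.2 ha.1).trans (eq_of_farberTG_adj_of_lt hp hb.2 hb.1).symm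

theorem farberTG_exists_increasing_path {last : Fin n} (hlast : (last : ℕ) = n - 1)
    (j : Fin n) : ∃ q : (farberTG n p).Walk j last,
      q.IsPath ∧ (∀ x ∈ q.support, j ≤ x) ∧ ∀ d ∈ q.darts, d.fst < d.snd := by
  induction j using WellFoundedGT.induction with
  | _ j ih =>
  by_cases hj : (j : ℕ) < n - 1
  · obtain ⟨q, hq, hsupp, hdarts⟩ := ih (p j) (hp j hj)
    refine ⟨.cons (farberTG_adj_p hp j hj) q, ?_, ?_, ?_⟩
    · exact hq.cons fun hmem => (hp j hj).not_ge (hsupp j hmem)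
    · simp only [Walk.support_cons, List.mem_cons, forall_eq_or_imp, le_refl, true_and]
      exact fun x hx => (hp j hj).le.trans (hsupp x hx)
    · simp only [Walk.darts_cons, List.mem_cons, forall_eq_or_imp]
      exact ⟨hp j hj, hdarts⟩
  · obtain rfl : j = last := Fin.ext (by omega)
    exact ⟨.nil, .nil, by simp, by simp⟩

theorem farberTG_isTree (hn : 1 ≤ n) : (farberTG n p).IsTree := by
  let last : Fin n := ⟨n - 1, Nat.sub_lt hn Nat.one_pos⟩
  have reach (j : Fin n) : (farberTG n p).Reachable j last :=
    (farberTG_exists_increasing_path hp rfl j).elim fun q _ => ⟨q⟩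
  exact ⟨(connected_iff _).2 ⟨fun u v => (reach u).trans (reach v).symm, ⟨last⟩⟩,
    farberTG_isAcyclic hp⟩

theorem farberTG_sum_darts_of_isPath (hn : 1 ≤ n) {last : Fin n} (hlast : (last : ℕ) = n - 1)
    {j : Fin n} {q : (farberTG n p).Walk j last} (hq : q.IsPath) :
    (q.darts.map fun d => |((d.snd : ℕ) : ℝ) - ((d.fst : ℕ) : ℝ)|).sum
      = (n : ℝ) - ((j : ℕ) + 1) := by
  obtain ⟨q₀, hq₀, -, hdarts⟩ := farberTG_exists_increasing_path hp hlast j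
  obtain rfl : q = q₀ := ((farberTG_isTree hp hn).existsUnique_path _ _).unique hq hq₀
  have hsub : ∀ d ∈ q.darts, |((d.snd : ℕ) : ℝ) - ((d.fst : ℕ) : ℝ)|
      = ((d.snd : ℕ) : ℝ) - ((d.fst : ℕ) : ℝ) := fun d hd =>
    abs_of_pos (sub_pos.2 (Nat.cast_lt.2 (hdarts d hd)))
  rw [List.map_congr_left hsub, Walk.sum_darts_map_sub (fun i : Fin n => ((i : ℕ) : ℝ))]
  push_cast [hlast, Nat.cast_sub hn]
  ring

end Farber

theorem IsStrongElimOrder.lt_of_mem_farberSub {α : Type*} {G : SimpleGraph α} {n : ℕ}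
    {σ : Fin n ≃ α} (hσ : IsStrongElimOrder G σ) {k l x y : Fin n} (hkl : k < l)
    (hx : x ∈ farberSub G σ k \ farberSub G σ l) (hy : y ∈ farberSub G σ k ∩ farberSub G σ l) :
    x < y := by
  obtain ⟨⟨hxk, hxNk⟩, hxl⟩ := hx
  obtain ⟨⟨-, hyNk⟩, -, hyNl⟩ := hy
  have hxNl : σ x ∉ closedNbhd G (σ l) := fun h => hxl ⟨hxk.trans hkl.le, h⟩
  rcases lt_trichotomy x y with h | rfl | h
  · exact h
  · exact absurd hyNl hxNl
  · exact absurd (hσ k l y x hkl h hyNk hxNk hyNl) hxNl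

theorem IsStrongElimOrder.overshadowsBy_farberSub {α : Type*} {G : SimpleGraph α} {n : ℕ}
    {σ : Fin n ≃ α} (hσ : IsStrongElimOrder G σ) {d : Fin n → ℝ} (hd : StrictAnti d)
    {k l : Fin n} (hkl : k < l) : OvershadowsBy d (farberSub G σ l) (farberSub G σ k) :=
  fun _ hx _ hy => hd (hσ.lt_of_mem_farberSub hkl hx hy)

/-- In Farber's construction applied to a strong elimination order, with the
edge `{v_j, v_{p j}}` weighted `p j - j` and the tree rooted at the last node,
the node `v_j` has depth `n - j` (here in `Fin n`-indexing, node `i` stands for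
`v_{i+1}` and has depth `n - (i+1)`), and `T_ℓ` overshadows `T_k` whenever
`k < ℓ`. -/
theorem farber_construction_strong {α : Type} (G : SimpleGraph α)
    {n : ℕ} (hn : 1 ≤ n) (σ : Fin n ≃ α) (hσ : IsStrongElimOrder G σ)
    (p : Fin n → Fin n)
    (hp1 : ∀ j : Fin n, (∃ k : Fin n, j < k ∧ G.Adj (σ j) (σ k)) →
      (j < p j ∧ G.Adj (σ j) (σ (p j)) ∧
        ∀ k : Fin n, j < k → G.Adj (σ j) (σ k) → p j ≤ k))
    (hp2 : ∀ j : Fin n, (¬ ∃ k : Fin n, j < k ∧ G.Adj (σ j) (σ k)) →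
      ((p j : ℕ) = n - 1)) :
    (farberTG n p).IsTree ∧
    (∀ (j : Fin n) (q : (farberTG n p).Walk j ⟨n - 1, by omega⟩), q.IsPath →
      (q.darts.map (fun d =>
          |(((d.toProd.2 : Fin n) : ℕ) : ℝ) - (((d.toProd.1 : Fin n) : ℕ) : ℝ)|)).sum
        = (n : ℝ) - ((j : ℕ) + 1)) ∧
    (∀ k l : Fin n, k < l →
      OvershadowsBy (fun i : Fin n => (n : ℝ) - ((i : ℕ) + 1))
        (farberSub G σ l) (farberSub G σ k)) := by
  have hp (j : Fin n) (hj : (j : ℕ) < n - 1) : j < p j := by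
    by_cases h : ∃ k, j < k ∧ G.Adj (σ j) (σ k)
    · exact (hp1 j h).1
    · exact Fin.lt_def.2 (by have := hp2 j h; omega)
  have depth_anti : StrictAnti fun i : Fin n => (n : ℝ) - ((i : ℕ) + 1) := fun a b hab => by
    simpa using Fin.lt_def.1 hab
  exact ⟨farberTG_isTree hp hn, fun _ _ hq => farberTG_sum_darts_of_isPath hp hn rfl hq,
    fun k l hkl => hσ.overshadowsBy_farberSub depth_anti hkl⟩
end
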